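/- arXiv:math/0603312 — 2 statements merged into one kernel-verified Lean document; each statement's English description precedes it below -/
import Mathlib

section
/- In ℤ[[t]], the formal power series F(t) = (t^3 + 7t^2 + 7t + 1) + t^2 · (2t^6 − 2t^5 + t^4 − t^2 + 2t − 2) · (t^7 − 1)⁻¹, where (t^7 − 1)⁻¹ = −∑_{k≥0} t^{7k}, satisfies: the coefficients of F at t^0, t^1, t^2, t^3 are 1, 7, 9, −1 respectively. In particular the coefficient at t^3 is negative. -/
open PowerSeries

/-- `(t^7 - 1)⁻¹ = -∑_{k≥0} t^{7k}` in `ℤ[[t]]`. -/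
noncomputable def invT7 : PowerSeries ℤ :=
  PowerSeries.mk fun n => if 7 ∣ n then (-1 : ℤ) else 0

/-- The stringy E-function (in `t = uv`) of a projective threefold with a unique
`E_6` singularity. -/
noncomputable def Fser : PowerSeries ℤ :=
  ((X : PowerSeries ℤ) ^ 3 + 7 * X ^ 2 + 7 * X + 1) +
    X ^ 2 * (2 * X ^ 6 - 2 * X ^ 5 + X ^ 4 - X ^ 2 + 2 * X - 2) * invT7

/-!
Since `(t^7 - 1) · invT7 = 1`, we have `invT7 = t^7 · invT7 - 1`, so `invT7 ≡ -1 mod t^7`.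
Below degree 7 the series `F` therefore agrees with the polynomial
`(t^3 + 7t^2 + 7t + 1) - t^2 (2t^6 - 2t^5 + t^4 - t^2 + 2t - 2) ≡ 1 + 7t + 9t^2 - t^3 + t^4 - t^6`.
-/

namespace PowerSeries

theorem X_pow_sub_one_mul_mk_neg_dvd {R : Type*} [Ring R] {k : ℕ} (hk : k ≠ 0) :
    ((X : R⟦X⟧) ^ k - 1) * mk (fun n => if k ∣ n then -1 else 0) = 1 := by
  ext n
  simp only [sub_mul, one_mul, map_sub, coeff_X_pow_mul', coeff_mk, coeff_one]
  rcases lt_or_ge n k with hn | hn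
  · have hdvd : k ∣ n ↔ n = 0 := ⟨fun h => Nat.eq_zero_of_dvd_of_lt h hn, by rintro rfl; simp⟩
    simp only [if_neg (not_le.mpr hn), hdvd]
    split_ifs <;> simp
  · have hdvd : k ∣ n - k ↔ k ∣ n := Nat.dvd_sub_iff_left hn (dvd_refl k)
    simp [hn, hdvd, show n ≠ 0 by omega]

@[simp]
theorem coeff_ofNat_mul {R : Type*} [Semiring R] (c : ℕ) [c.AtLeastTwo] (φ : R⟦X⟧) (n : ℕ) :
    coeff n (ofNat(c) * φ) = ofNat(c) * coeff n φ := by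
  rw [← map_ofNat C, coeff_C_mul]

end PowerSeries

theorem X_pow_seven_sub_one_mul_invT7 : ((X : ℤ⟦X⟧) ^ 7 - 1) * invT7 = 1 :=
  X_pow_sub_one_mul_mk_neg_dvd (by norm_num)

theorem Fser_eq : Fser = (1 + 7 * X + 9 * X ^ 2 - X ^ 3 + X ^ 4 - X ^ 6) +
    X ^ 7 * (2 - 2 * X + X ^ 2 * (2 * X ^ 6 - 2 * X ^ 5 + X ^ 4 - X ^ 2 + 2 * X - 2) * invT7) := by
  rw [Fser]
  linear_combination
    (-X ^ 2 * (2 * X ^ 6 - 2 * X ^ 5 + X ^ 4 - X ^ 2 + 2 * X - 2) : ℤ⟦X⟧) *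
      X_pow_seven_sub_one_mul_invT7

theorem coeff_Fser_of_lt {n : ℕ} (hn : n < 7) :
    coeff n Fser = coeff n (1 + 7 * X + 9 * X ^ 2 - X ^ 3 + X ^ 4 - X ^ 6 : ℤ⟦X⟧) := by
  rw [Fser_eq, map_add, coeff_X_pow_mul', if_neg (by omega), add_zero]

/-- The coefficients of `F` at `t^0, t^1, t^2, t^3` are `1, 7, 9, -1`; in particular the
coefficient at `t^3` is negative.  (Here `(t^7-1)⁻¹` is indeed `-∑ t^{7k}`.) -/
theorem stmt10 :
    ((X : PowerSeries ℤ) ^ 7 - 1) * invT7 = 1 ∧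
    PowerSeries.coeff 0 Fser = 1 ∧
    PowerSeries.coeff 1 Fser = 7 ∧
    PowerSeries.coeff 2 Fser = 9 ∧
    PowerSeries.coeff 3 Fser = -1 ∧
    PowerSeries.coeff 3 Fser < 0 := by
  have coeff_three : coeff 3 Fser = -1 := by
    rw [coeff_Fser_of_lt (by norm_num)]
    simp [coeff_X_pow, coeff_X, coeff_one]
  refine ⟨X_pow_seven_sub_one_mul_invT7, ?_, ?_, ?_, coeff_three, coeff_three.trans_lt (by norm_num)⟩
  all_goals
    rw [coeff_Fser_of_lt (by norm_num)]
    simp [coeff_X_pow, coeff_X, coeff_one]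
end

section
/- Let T be a finite set, a : T → ℤ with a(i) ≥ 1, and for I ⊆ T let c^I : ℕ × ℕ → ℤ be given coefficient functions with c^∅ = c. In ℤ[[u,v]], expand E = ∑_{I⊆T} (∑_{p,q} c^I_{p,q} u^p v^q) · ∏_{i∈I} (uv − (uv)^{a(i)+1})/((uv)^{a(i)+1} − 1) as ∑ b_{i,j} u^i v^j. Fix d ≥ 4 and suppose a(l) > ⌊(d−4)/2⌋ for all l ∈ T, and that c^I_{p,q} = 0 whenever p + q > 2(d − |I|) (dimension bound). Then for all (i,j) with i ≥ j and i + j ≤ d: b_{i,j} = c_{i,j} + ∑_{k=1}^{j} (−1)^k ∑_{|J|=k} c^J_{i−k, j−k} + R_{i,j}, where R_{i,j} = ∑_{l : a(l) = d/2 − 1} c^{{l}}_{0,0} if d is even and i = j = d/2; R_{i,j} = ∑_{l : a(l) = (d−3)/2} c^{{l}}_{0,0} if d is odd and i = j = (d−1)/2; R_{i,j} = ∑_{l : a(l) = (d−3)/2} c^{{l}}_{1,0} if d is odd, i = (d+1)/2 and j = (d−1)/2; and R_{i,j} = 0 otherwise. -/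
/-!
Write `t = uv`. Each factor `(t - t^(a+1))/(t^(a+1) - 1) = -t + t^(a+1) - t^(a+2) + ⋯` is a power
series in `t` alone, so the coefficient of `u^i v^j` in `E` is
`∑_{m ≤ j} c^I_{i-m,j-m} · [t^m] ∏_{l ∈ I} (-t + t^(a l+1) - ⋯)`. Since `j ≤ d/2 ≤ a l + 1`, only
two kinds of terms survive in `[t^m]` of the product: `(-t)^|I|` when `m = |I|`, and `t^(a l+1)`
when `I = {l}` and `m = a l + 1`. The latter occurs only for `m = j = ⌊d/2⌋` and produces `R_{i,j}`.
-/

/-- The element `uv` of `ℤ[[u,v]]`. -/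
noncomputable def Uv : MvPowerSeries (Fin 2) ℤ :=
  MvPowerSeries.X 0 * MvPowerSeries.X 1

/-- The inverse `-∑_{k≥0} (uv)^{k(a+1)}` of `(uv)^(a+1) - 1` in `ℤ[[u,v]]`. -/
noncomputable def invUv (a : ℕ) : MvPowerSeries (Fin 2) ℤ :=
  fun e => if e 0 = e 1 ∧ (a + 1) ∣ e 0 then -1 else 0

/-- The two-variable power series `∑_{p,q} h p q · u^p v^q` attached to a
coefficient function `h`. -/
noncomputable def HDser (h : ℕ → ℕ → ℤ) : MvPowerSeries (Fin 2) ℤ :=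
  fun e => h (e 0) (e 1)

open Finset

namespace PowerSeries

variable {R : Type*} [CommRing R]

noncomputable def invXPowSubOne (a : ℕ) : R⟦X⟧ :=
  mk fun n => if (a + 1) ∣ n then -1 else 0

noncomputable def discrepancyFactor (a : ℕ) : R⟦X⟧ :=
  (X - X ^ (a + 1)) * invXPowSubOne a

theorem invXPowSubOne_eq (a : ℕ) :
    invXPowSubOne a = -1 + X ^ (a + 1) * (invXPowSubOne a : R⟦X⟧) := by
  ext n
  simp only [invXPowSubOne, map_add, map_neg, coeff_one, coeff_X_pow_mul', coeff_mk]
  rcases lt_or_ge n (a + 1) with hn | hn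
  · rcases n.eq_zero_or_pos with rfl | hn0
    · simp
    · simp [Nat.not_dvd_of_pos_of_lt hn0 hn, hn0.ne', hn.not_ge]
  · have hdvd : n ≤ a + 1 → a + 1 ∣ n := fun h => by rw [le_antisymm h hn]
    simp [Nat.dvd_sub_self_right, hn, show n ≠ 0 by omega, or_iff_left_of_imp hdvd]

theorem discrepancyFactor_eq (a : ℕ) :
    discrepancyFactor a =
      -X + X ^ (a + 1) + X ^ (a + 2) * ((1 - X ^ a) * (invXPowSubOne a : R⟦X⟧)) := by
  conv_lhs => rw [discrepancyFactor, invXPowSubOne_eq]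
  ring

theorem coeff_discrepancyFactor_mul {a m : ℕ} (hm : m ≤ a + 1) (f : R⟦X⟧) :
    coeff m (discrepancyFactor a * f) =
      (if m = a + 1 then coeff 0 f else 0) - if m = 0 then 0 else coeff (m - 1) f := by
  have hX : coeff m (X ^ (a + 1) * f) = if m = a + 1 then coeff 0 f else 0 := by
    rw [coeff_X_pow_mul']
    split_ifs <;> first | omega | simp_all
  rw [discrepancyFactor_eq]
  simp only [add_mul, neg_mul, mul_assoc, map_add, map_neg, hX, coeff_X_pow_mul',
    if_neg (show ¬a + 2 ≤ m by omega)]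
  cases m <;> simp [coeff_succ_X_mul, sub_eq_neg_add]

theorem coeff_prod_discrepancyFactor {ι : Type*} [Fintype ι] [DecidableEq ι] (a : ι → ℕ)
    (I : Finset ι) {m : ℕ} (hm : ∀ l ∈ I, m ≤ a l + 1) :
    coeff m (∏ l ∈ I, discrepancyFactor (a l) : R⟦X⟧) =
      (if #I = m then (-1) ^ m else 0) + ∑ l with a l + 1 = m, if I = {l} then 1 else 0 := by
  induction I using Finset.induction_on generalizing m with
  | empty => cases m <;> simp [coeff_one]
  | insert l₀ I hl₀ ih =>
    have hconst :
        coeff 0 (∏ l ∈ I, discrepancyFactor (a l) : R⟦X⟧) = if I = ∅ then 1 else 0 := by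
      simp [ih (m := 0) fun _ _ => Nat.zero_le _]
    have hprev (hm0 : m ≠ 0) : coeff (m - 1) (∏ l ∈ I, discrepancyFactor (a l) : R⟦X⟧) =
        if #I = m - 1 then (-1) ^ (m - 1) else 0 := by
      rw [ih fun l hl => by have := hm l (mem_insert_of_mem hl); omega, add_eq_left]
      refine sum_eq_zero fun l hl => if_neg ?_
      rintro rfl
      have := hm l (by simp)
      simp only [mem_filter] at hl
      omega
    have hsingle (l : ι) : insert l₀ I = {l} ↔ l₀ = l ∧ I = ∅ := by
      simp only [eq_singleton_iff_unique_mem, mem_insert, forall_eq_or_imp,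
        eq_empty_iff_forall_notMem]
      grind
    rw [prod_insert hl₀, coeff_discrepancyFactor_mul (hm l₀ (mem_insert_self _ _)), hconst,
      card_insert_of_notMem hl₀]
    simp_rw [hsingle, ite_and, sum_ite_eq, mem_filter, mem_univ, true_and]
    cases m with
    | zero => simp
    | succ k =>
      rw [if_neg k.succ_ne_zero, hprev k.succ_ne_zero]
      simp only [Nat.add_sub_cancel, add_left_inj, pow_succ, eq_comm (a := k + 1)]
      split_ifs <;> ring

end PowerSeries

open Finsupp (single)

noncomputable abbrev bideg (i j : ℕ) : Fin 2 →₀ ℕ := single 0 i + single 1 j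

@[simp] theorem bideg_apply_zero (i j : ℕ) : bideg i j 0 = i := by simp [bideg]

@[simp] theorem bideg_apply_one (i j : ℕ) : bideg i j 1 = j := by simp [bideg]

theorem Uv_pow (n : ℕ) : Uv ^ n = MvPowerSeries.monomial (bideg n n) 1 := by
  rw [Uv, mul_pow, MvPowerSeries.X_pow_eq, MvPowerSeries.X_pow_eq,
    MvPowerSeries.monomial_mul_monomial, one_mul]

theorem hasSubst_Uv : PowerSeries.HasSubst Uv :=
  PowerSeries.HasSubst.of_constantCoeff_zero (by simp [Uv])

theorem coeff_subst_Uv (f : PowerSeries ℤ) (e : Fin 2 →₀ ℕ) :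
    MvPowerSeries.coeff e (f.subst Uv) = if e 0 = e 1 then PowerSeries.coeff (e 0) f else 0 := by
  have he (n : ℕ) : e = bideg n n ↔ e 0 = n ∧ e 1 = n := by
    simp [Finsupp.ext_iff, Fin.forall_fin_two]
  rw [PowerSeries.coeff_subst hasSubst_Uv]
  simp only [Uv_pow, MvPowerSeries.coeff_monomial, he, smul_eq_mul, mul_ite, mul_one, mul_zero]
  split_ifs with h
  · rw [finsum_eq_single _ (e 0) fun n hn => if_neg fun h' => hn h'.1.symm]
    simp [h]
  · exact finsum_eq_zero_of_forall_eq_zero fun n => if_neg fun h' => h (h'.1.trans h'.2.symm)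

theorem invUv_eq_subst (a : ℕ) :
    invUv a = (PowerSeries.invXPowSubOne a : PowerSeries ℤ).subst Uv := by
  ext e
  rw [coeff_subst_Uv, PowerSeries.invXPowSubOne, PowerSeries.coeff_mk]
  exact ite_and ..

theorem prod_eq_subst_prod_discrepancyFactor {ι : Type*} (a : ι → ℕ) (I : Finset ι) :
    ∏ l ∈ I, (Uv - Uv ^ (a l + 1)) * invUv (a l) =
      (∏ l ∈ I, PowerSeries.discrepancyFactor (a l) : PowerSeries ℤ).subst Uv := by
  simp_rw [← PowerSeries.coe_substAlgHom hasSubst_Uv, map_prod, PowerSeries.discrepancyFactor,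
    map_mul, map_sub, map_pow, PowerSeries.substAlgHom_X, invUv_eq_subst,
    PowerSeries.coe_substAlgHom]

theorem coeff_mul_Uv_pow (F : MvPowerSeries (Fin 2) ℤ) (i j m : ℕ) :
    MvPowerSeries.coeff (bideg i j) (F * Uv ^ m) =
      if m ≤ i ∧ m ≤ j then MvPowerSeries.coeff (bideg (i - m) (j - m)) F else 0 := by
  have hle : bideg m m ≤ bideg i j ↔ m ≤ i ∧ m ≤ j := by
    simp [Finsupp.le_def, Fin.forall_fin_two]
  have hsub : bideg i j - bideg m m = bideg (i - m) (j - m) := by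
    ext k
    fin_cases k <;> simp
  simp only [Uv_pow, MvPowerSeries.coeff_mul_monomial, mul_one, hle, hsub]

theorem coeff_mul_subst_Uv (F : MvPowerSeries (Fin 2) ℤ) (g : PowerSeries ℤ) {i j : ℕ}
    (hji : j ≤ i) :
    MvPowerSeries.coeff (bideg i j) (F * g.subst Uv) =
      ∑ m ∈ range (j + 1),
        PowerSeries.coeff m g * MvPowerSeries.coeff (bideg (i - m) (j - m)) F := by
  conv_lhs => rw [PowerSeries.eq_X_pow_mul_shift_add_trunc (j + 1) g]
  rw [PowerSeries.subst_add hasSubst_Uv, PowerSeries.subst_mul hasSubst_Uv,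
    PowerSeries.subst_pow hasSubst_Uv, PowerSeries.subst_X hasSubst_Uv,
    PowerSeries.subst_coe hasSubst_Uv, Polynomial.aeval_def, PowerSeries.eval₂_trunc_eq_sum_range,
    mul_add, map_add, mul_left_comm, mul_comm (Uv ^ (j + 1)), coeff_mul_Uv_pow,
    if_neg (by omega), zero_add, mul_sum, map_sum]
  refine sum_congr rfl fun m hm => ?_
  rw [mem_range] at hm
  rw [mul_left_comm, MvPowerSeries.algebraMap_apply, Algebra.algebraMap_self, RingHom.id_apply,
    MvPowerSeries.coeff_C_mul, coeff_mul_Uv_pow, if_pos (by omega)]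

theorem coeff_HDser (h : ℕ → ℕ → ℤ) (i j : ℕ) :
    MvPowerSeries.coeff (bideg i j) (HDser h) = h i j := by
  show h (bideg i j 0) (bideg i j 1) = h i j
  simp

theorem sum_coeff_prod_discrepancyFactor_mul {ι : Type*} [Fintype ι] [DecidableEq ι]
    (a : ι → ℕ) {m : ℕ} (hm : ∀ l, m ≤ a l + 1) (f : Finset ι → ℤ) :
    ∑ I, PowerSeries.coeff m (∏ l ∈ I, PowerSeries.discrepancyFactor (a l) : PowerSeries ℤ) *
        f I =
      (-1) ^ m * ∑ J ∈ univ.powerset.filter (fun J : Finset ι => #J = m), f J +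
        ∑ l with a l + 1 = m, f {l} := by
  simp only [PowerSeries.coeff_prod_discrepancyFactor a _ fun l _ => hm l, add_mul,
    sum_add_distrib, ite_mul, zero_mul, sum_mul, one_mul]
  rw [sum_comm (s := univ), ← sum_filter, powerset_univ, mul_sum]
  simp

theorem sum_boundary_discrepancy_eq {T : Type*} [Fintype T] (d : ℕ) (a : T → ℕ)
    (ha : ∀ l, (d - 4) / 2 < a l) (f : T → ℕ → ℕ → ℤ) {i j : ℕ} (hji : j ≤ i)
    (hij : i + j ≤ d) :
    ∑ m ∈ range (j + 1), ∑ l with a l + 1 = m, f l (i - m) (j - m) =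
      if d % 2 = 0 ∧ i = d / 2 ∧ j = d / 2 then ∑ l with a l = d / 2 - 1, f l 0 0
      else if d % 2 = 1 ∧ i = (d - 1) / 2 ∧ j = (d - 1) / 2 then
        ∑ l with a l = (d - 3) / 2, f l 0 0
      else if d % 2 = 1 ∧ i = (d + 1) / 2 ∧ j = (d - 1) / 2 then
        ∑ l with a l = (d - 3) / 2, f l 1 0
      else 0 := by
  have hswap : ∑ m ∈ range (j + 1), ∑ l with a l + 1 = m, f l (i - m) (j - m) =
      ∑ l with a l + 1 < j + 1, f l (i - (a l + 1)) (j - (a l + 1)) := by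
    simp only [sum_filter]
    rw [sum_comm]
    simp only [sum_ite_eq, mem_range]
  rw [hswap]
  split_ifs with h₁ h₂ h₃
  pick_goal 4
  · refine sum_eq_zero fun l hl => ?_
    have := ha l
    simp only [mem_filter, mem_univ, true_and] at hl
    omega
  all_goals
    refine sum_congr (filter_congr fun l _ => by have := ha l; omega) fun l hl => ?_
    have := ha l
    simp only [mem_filter, mem_univ, true_and] at hl
    congr 2 <;> omega

theorem stmt13_general {T : Type*} [Fintype T] (d : ℕ)
    (a : T → ℕ) (ha : ∀ l, (d - 4) / 2 < a l)
    (c : Finset T → ℕ → ℕ → ℤ)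
    (i j : ℕ) (hji : j ≤ i) (hij : i + j ≤ d) :
    MvPowerSeries.coeff (R := ℤ) (Finsupp.single 0 i + Finsupp.single 1 j)
      (∑ I : Finset T, HDser (c I) *
        ∏ l ∈ I, (Uv - Uv ^ (a l + 1)) * invUv (a l))
    = c ∅ i j
      + (∑ k ∈ Finset.Icc 1 j, (-1 : ℤ) ^ k *
          ∑ J ∈ Finset.univ.powerset.filter (fun J : Finset T => J.card = k),
            c J (i - k) (j - k))
      + (if d % 2 = 0 ∧ i = d / 2 ∧ j = d / 2 then
            ∑ l ∈ Finset.univ.filter (fun l => a l = d / 2 - 1), c {l} 0 0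
          else if d % 2 = 1 ∧ i = (d - 1) / 2 ∧ j = (d - 1) / 2 then
            ∑ l ∈ Finset.univ.filter (fun l => a l = (d - 3) / 2), c {l} 0 0
          else if d % 2 = 1 ∧ i = (d + 1) / 2 ∧ j = (d - 1) / 2 then
            ∑ l ∈ Finset.univ.filter (fun l => a l = (d - 3) / 2), c {l} 1 0
          else 0) := by
  classical
  have hle (m : ℕ) (hm : m ∈ range (j + 1)) (l : T) : m ≤ a l + 1 := by
    have := ha l
    rw [mem_range] at hm
    omega
  calc _ = ∑ m ∈ range (j + 1), ∑ I : Finset T, PowerSeries.coeff m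
          (∏ l ∈ I, PowerSeries.discrepancyFactor (a l) : PowerSeries ℤ) * c I (i - m) (j - m) := by
        rw [map_sum, sum_comm]
        refine sum_congr rfl fun I _ => ?_
        rw [prod_eq_subst_prod_discrepancyFactor, coeff_mul_subst_Uv _ _ hji]
        simp only [coeff_HDser]
    _ = ∑ m ∈ range (j + 1), ((-1) ^ m * ∑ J ∈ univ.powerset.filter (fun J : Finset T => #J = m),
          c J (i - m) (j - m) + ∑ l with a l + 1 = m, c {l} (i - m) (j - m)) :=
        sum_congr rfl fun m hm => sum_coeff_prod_discrepancyFactor_mul a (hle m hm) _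
    _ = _ := by
        rw [sum_add_distrib, sum_boundary_discrepancy_eq d a ha (fun l => c {l}) hji hij, range_eq_Ico,
          sum_eq_sum_Ico_succ_bot (Nat.add_one_pos j), zero_add, Ico_add_one_right_eq_Icc]
        simp [filter_eq']

/-- Coefficient extraction in the proof of Theorem 3.1: the low-degree coefficients
`b_{i,j}` (for `i ≥ j`, `i + j ≤ d`) of
`E = ∑_{I⊆T} (∑ c^I_{p,q} u^p v^q) ∏_{l∈I} (uv - (uv)^(a l + 1))/((uv)^(a l + 1) - 1)`
are `c_{i,j} + ∑_{k=1}^j (-1)^k ∑_{|J|=k} c^J_{i-k,j-k} + R_{i,j}`, provided all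
`a l > ⌊(d-4)/2⌋` and the `c^I` satisfy the dimension bound. -/
theorem stmt13 {T : Type*} [Fintype T] [DecidableEq T] (d : ℕ) (hd : 4 ≤ d)
    (a : T → ℕ) (ha1 : ∀ l, 1 ≤ a l) (ha : ∀ l, (d - 4) / 2 < a l)
    (c : Finset T → ℕ → ℕ → ℤ)
    (hdim : ∀ (I : Finset T) (p q : ℕ), 2 * (d - I.card) < p + q → c I p q = 0)
    (i j : ℕ) (hji : j ≤ i) (hij : i + j ≤ d) :
    MvPowerSeries.coeff (R := ℤ) (Finsupp.single 0 i + Finsupp.single 1 j)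
      (∑ I : Finset T, HDser (c I) *
        ∏ l ∈ I, (Uv - Uv ^ (a l + 1)) * invUv (a l))
    = c ∅ i j
      + (∑ k ∈ Finset.Icc 1 j, (-1 : ℤ) ^ k *
          ∑ J ∈ Finset.univ.powerset.filter (fun J : Finset T => J.card = k),
            c J (i - k) (j - k))
      + (if d % 2 = 0 ∧ i = d / 2 ∧ j = d / 2 then
            ∑ l ∈ Finset.univ.filter (fun l => a l = d / 2 - 1), c {l} 0 0
          else if d % 2 = 1 ∧ i = (d - 1) / 2 ∧ j = (d - 1) / 2 then
            ∑ l ∈ Finset.univ.filter (fun l => a l = (d - 3) / 2), c {l} 0 0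
          else if d % 2 = 1 ∧ i = (d + 1) / 2 ∧ j = (d - 1) / 2 then
            ∑ l ∈ Finset.univ.filter (fun l => a l = (d - 3) / 2), c {l} 1 0
          else 0) :=
  stmt13_general d a ha c i j hji hij
end
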